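/- arXiv:1011.4133 — 6 statements merged into one kernel-verified Lean document; each statement's English description precedes it below -/
import Mathlib

section
/- Let k be a field, let A be a unital associative k-algebra, and let e ∈ A be an idempotent such that the corner ring eAe = {eae : a ∈ A} is locally finite over k, i.e., every finite subset of eAe generates a finite-dimensional (not necessarily unital) k-subalgebra. Then the two-sided ideal AeA generated by e is locally finite over k: every finite subset of AeA generates a finite-dimensional (not necessarily unital) k-subalgebra. -/
/-!
Write the finitely many generators as combinations of elements `a i * e * b i`, and let `B` be
the subalgebra generated by `e` and the finitely many `e * (b i * a j) * e`; it lies in the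
corner, so it is finite-dimensional and `e` is a two-sided unit for it. The span of all
`a i * B * b j` is then finite-dimensional, contains the generators, and is closed under
multiplication: as `c = c * e` and `c' = e * c'` for `c, c' ∈ B`,
`(a i * c * b j) * (a k * c' * b l) = a i * (c * (e * (b j * a k) * e) * c') * b l`.
-/

open Set
open scoped Pointwise

universe u

def NonUnitalSubalgebra.corner (R : Type*) {A : Type*} [CommSemiring R] [Semiring A]
    [Algebra R A] (e : A) : NonUnitalSubalgebra R A where
  __ := NonUnitalSubsemiring.corner e
  smul_mem' r := by
    rintro _ ⟨a, rfl⟩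
    exact ⟨r • a, by simp only [mul_smul_comm, smul_mul_assoc]⟩

namespace TwoSidedIdeal

variable (R : Type*) {A : Type u} [CommRing R] [Ring A] [Algebra R A]

lemma coe_span_subset_span (s : Set A) :
    (span s : Set A) ⊆ (Submodule.span R (univ * s * univ) : Set A) := fun _ hz =>
  (AddSubgroup.closure_le (Submodule.span R _).toAddSubgroup).2 Submodule.subset_span
    (mem_span_iff_mem_addSubgroup_closure.1 hz)

lemma exists_subset_span_mul_mul_of_subset_span_singleton {e : A} {S : Set A} (hS : S.Finite)
    (hSe : S ⊆ span {e}) : ∃ (ι : Type u) (_ : Finite ι) (a b : ι → A),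
      S ⊆ Submodule.span R (range fun i => a i * e * b i) := by
  obtain ⟨F, hFe, hSF⟩ := Submodule.subset_span_finite_of_subset_span (R := R)
    (t := hS.toFinset) (by simpa using hSe.trans (coe_span_subset_span R {e}))
  have hFsplit (p : F) : ∃ a b : A, a * e * b = p := by
    simpa [Set.mem_mul, mul_assoc] using hFe p.2
  choose a b hab using hFsplit
  refine ⟨F, inferInstance, a, b, fun s hs => Submodule.span_mono ?_ (hSF (by simpa using hs))⟩
  exact fun p hp => ⟨⟨p, hp⟩, hab _⟩

end TwoSidedIdeal

section Sandwich

variable {R A ι : Type*} [CommSemiring R] [Semiring A] [Algebra R A]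

def sandwichSpan (a b : ι → A) (B : Submodule R A) : Submodule R A :=
  ⨆ i, ⨆ j, B.map (LinearMap.mulLeftRight R (a i, b j))

lemma mul_mul_mem_sandwichSpan {a b : ι → A} {B : Submodule R A} {c : A} (hc : c ∈ B)
    (i j : ι) : a i * c * b j ∈ sandwichSpan a b B :=
  Submodule.mem_iSup_of_mem i <| Submodule.mem_iSup_of_mem j ⟨c, hc, rfl⟩

lemma sandwichSpan_mul_self_le {a b : ι → A} {e : A} {B : NonUnitalSubalgebra R A}
    (hBe : ∀ c ∈ B, e * c = c ∧ c * e = c) (hBab : ∀ i j, e * (b i * a j) * e ∈ B) :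
    sandwichSpan a b B.toSubmodule * sandwichSpan a b B.toSubmodule ≤
      sandwichSpan a b B.toSubmodule := by
  simp only [sandwichSpan, Submodule.iSup_mul, Submodule.mul_iSup, iSup_le_iff,
    Submodule.mul_le]
  rintro k l i j _ ⟨c, hc : c ∈ B, rfl⟩ _ ⟨c', hc' : c' ∈ B, rfl⟩
  have hprod :
      a i * c * b j * (a k * c' * b l) = a i * (c * (e * (b j * a k) * e) * c') * b l := by
    conv_lhs => rw [← (hBe c hc).2, ← (hBe c' hc').1]
    simp only [mul_assoc]
  simpa only [LinearMap.mulLeftRight_apply, hprod, sandwichSpan] using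
    mul_mul_mem_sandwichSpan
      (B.mem_toSubmodule.2 (mul_mem (mul_mem hc (hBab j k)) hc')) i l

end Sandwich

instance {R A ι : Type*} [CommRing R] [Ring A] [Algebra R A] [Finite ι] (a b : ι → A)
    (B : Submodule R A) [Module.Finite R B] :
    Module.Finite R (sandwichSpan a b B) := by
  unfold sandwichSpan
  infer_instance

theorem NonUnitalAlgebra.finite_adjoin_of_subset_of_mul_le {R A : Type*} [CommRing R]
    [IsNoetherianRing R] [Ring A] [Algebra R A] {S : Set A} {M : Submodule R A}
    [Module.Finite R M] (hSM : S ⊆ M) (hM : M * M ≤ M) :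
    Module.Finite R (NonUnitalAlgebra.adjoin R S) :=
  have hle : (NonUnitalAlgebra.adjoin R S).toSubmodule ≤ M :=
    NonUnitalAlgebra.adjoin_le
      (S := M.toNonUnitalSubalgebra fun _ _ hx hy => hM (Submodule.mul_mem_mul hx hy)) hSM
  Module.Finite.of_injective (Submodule.inclusion hle) (Submodule.inclusion_injective hle)

/-- If `e` is an idempotent of a unital `k`-algebra `A` whose corner
`eAe = {eae : a ∈ A}` is locally finite over `k`, then the two-sided ideal `AeA`
generated by `e` is locally finite over `k`: every finite subset of it generates a
finite-dimensional (not necessarily unital) `k`-subalgebra. -/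
theorem locallyFinite_ideal_of_locallyFinite_corner
    (k A : Type) [Field k] [Ring A] [Algebra k A]
    (e : A) (he : e * e = e)
    (hcorner : ∀ S : Set A, S.Finite → S ⊆ {x : A | ∃ a : A, x = e * a * e} →
      Module.Finite k ↥(NonUnitalAlgebra.adjoin k S)) :
    ∀ S : Set A, S.Finite → S ⊆ (TwoSidedIdeal.span {e} : Set A) →
      Module.Finite k ↥(NonUnitalAlgebra.adjoin k S) := by
  intro S hS hSe
  obtain ⟨ι, _, a, b, hSab⟩ :=
    TwoSidedIdeal.exists_subset_span_mul_mul_of_subset_span_singleton k hS hSe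
  set T := insert e (range fun ij : ι × ι => e * (b ij.1 * a ij.2) * e)
  have hTe : T ⊆ NonUnitalSubalgebra.corner k e := by
    refine insert_subset_iff.2 ⟨⟨1, by simp [he]⟩, ?_⟩
    rintro _ ⟨ij, rfl⟩
    exact ⟨_, rfl⟩
  set B := NonUnitalAlgebra.adjoin k T
  have : Module.Finite k B :=
    hcorner T ((finite_range _).insert e) fun x hx => (hTe hx).imp fun _ => Eq.symm
  have hBe (c : A) (hc : c ∈ B) : e * c = c ∧ c * e = c :=
    (Subsemigroup.mem_corner_iff he).1 (NonUnitalAlgebra.adjoin_le hTe hc)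
  refine NonUnitalAlgebra.finite_adjoin_of_subset_of_mul_le (M := sandwichSpan a b B.toSubmodule)
    (hSab.trans (Submodule.span_le.2 ?_)) (sandwichSpan_mul_self_le hBe fun i j => ?_)
  · rintro _ ⟨i, rfl⟩
    exact mul_mul_mem_sandwichSpan (NonUnitalAlgebra.subset_adjoin k (mem_insert e _)) i i
  · exact NonUnitalAlgebra.subset_adjoin k (mem_insert_of_mem _ ⟨(i, j), rfl⟩)
end

section
/- Let k be a field, let A be a unital associative k-algebra, and let I be a two-sided ideal of A that is locally finite over k, i.e., every finite subset of I generates a finite-dimensional (not necessarily unital) k-subalgebra. If the quotient algebra A/I is algebraic over k, then A is algebraic over k. -/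
/-!
For `a ∈ A`, a polynomial `p` killing the image of `a` in `A/I` gives `b = p(a) ∈ I`. The
non-unital subalgebra generated by `b` is finite-dimensional, so `b` is integral, say `r(b) = 0`;
then `r ∘ p` is a nonzero polynomial killing `a`.
-/

open Polynomial

theorem NonUnitalSubalgebra.isIntegral_of_mem {R A : Type*} [CommRing R] [Ring A] [Algebra R A]
    (N : NonUnitalSubalgebra R A) [Module.Finite R N] {x : A} (hx : x ∈ N) : IsIntegral R x := by
  have : Module.Finite R (Unitization R N) := .equiv (Unitization.linearEquiv R R N).symm
  simpa using (IsIntegral.of_finite R (Unitization.inr ⟨x, hx⟩ : Unitization R N)).map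
    (NonUnitalSubalgebra.unitization N)

theorem TwoSidedIdeal.exists_aeval_mem_of_isAlgebraic {K A : Type*} [Field K] [Ring A]
    [Algebra K A] (I : TwoSidedIdeal A) {a : A} (ha : IsAlgebraic K (I.ringCon.mkₐ K a)) :
    ∃ p : K[X], p.natDegree ≠ 0 ∧ aeval a p ∈ I := by
  obtain ⟨p, hp0, hp⟩ := ha
  -- the factor `X` makes the polynomial nonconstant even if `p` is a constant (when `I = ⊤`)
  refine ⟨X * p, by simp [natDegree_X_mul hp0], ?_⟩
  rw [TwoSidedIdeal.mem_iff, ← I.ringCon.eq]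
  change I.ringCon.mkₐ K (aeval a (X * p)) = I.ringCon.mkₐ K 0
  rw [← aeval_algHom_apply, map_mul, hp, mul_zero, map_zero]

/-- If a two-sided ideal `I` of a unital `k`-algebra `A` is locally finite over `k`
and the quotient `A/I` is algebraic over `k`, then `A` is algebraic over `k`. -/
theorem algebraic_of_locallyFinite_ideal_and_algebraic_quotient
    (k A : Type) [Field k] [Ring A] [Algebra k A]
    (I : TwoSidedIdeal A)
    (hLF : ∀ S : Set A, S.Finite → S ⊆ (I : Set A) →
      Module.Finite k ↥(NonUnitalAlgebra.adjoin k S))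
    (hquot : ∀ q : I.ringCon.Quotient, IsAlgebraic k q) :
    ∀ a : A, IsAlgebraic k a := by
  intro a
  obtain ⟨p, hp, hpI⟩ := I.exists_aeval_mem_of_isAlgebraic (hquot (I.ringCon.mkₐ k a))
  have := hLF {aeval a p} (Set.finite_singleton _) (Set.singleton_subset_iff.2 hpI)
  have hint : IsIntegral k (aeval a p) :=
    NonUnitalSubalgebra.isIntegral_of_mem _ (NonUnitalAlgebra.self_mem_adjoin_singleton k _)
  refine hint.isAlgebraic.of_aeval p hp (mem_nonZeroDivisors_of_ne_zero ?_)
  exact leadingCoeff_ne_zero.2 (ne_zero_of_natDegree_gt (Nat.pos_of_ne_zero hp))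
end

section
/- Let k be a field and let A be a (not necessarily unital) associative k-algebra that is generated as a k-algebra by finitely many elements, is infinite-dimensional as a k-vector space, and in which every element is nilpotent. Then there exists a two-sided ideal P of A such that the quotient A/P is a nonzero prime ring and is infinite-dimensional as a k-vector space. -/
/-- `nupow a n = a ^ (n + 1)`, powers in a not necessarily unital ring. -/
def nupow {A : Type} [NonUnitalRing A] (a : A) : ℕ → A
  | 0 => a
  | n + 1 => nupow a n * a

/-- An element of a not necessarily unital ring is nilpotent if some positive power
of it vanishes. -/
def IsNilElem {A : Type} [NonUnitalRing A] (a : A) : Prop :=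
  ∃ n : ℕ, nupow a n = 0

/-!
Write `A ^ (n + 1)` for the span of all products of `n + 1` elements of `A`. Since `A` is
generated by a finite set `s`, the ideal `A ^ (n + 1)` is generated as a right ideal by the
finitely many monomials of length `n + 1` in `s`, and `A / A ^ (n + 1)` is finite-dimensional;
as `A` is not, no `A ^ (n + 1)` vanishes. By Zorn's lemma, finite generation taking care of
chains, some `k`-ideal `Q` is maximal among those containing no `A ^ (n + 1)`, and it is prime
because `A ^ (m + m' + 2) ⊆ A ^ (m + 1) A ^ (m' + 1)`.

If `A / Q` were finite-dimensional, the chain `Q + A ^ (n + 1)` would stabilise at some `W` with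
`W ⊆ Q + A W`. A Nakayama argument then gives `W ⊆ Q`: going up through left ideals `L ⊇ Q`,
an element `x ∈ W` with `A x ⊄ L` would satisfy `x ∈ L + A x`, i.e. `x - b x ∈ L`, and
nilpotency of `b` forces `x ∈ L`.
-/

open Submodule Pointwise

namespace Submodule

section Ideals

variable {k A : Type*} [Semiring k] [NonUnitalSemiring A] [Module k A]

def IsLeftIdeal (V : Submodule k A) : Prop := ∀ a : A, ∀ x ∈ V, a * x ∈ V

def IsRightIdeal (V : Submodule k A) : Prop := ∀ x ∈ V, ∀ a : A, x * a ∈ V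

def IsIdeal (V : Submodule k A) : Prop := V.IsLeftIdeal ∧ V.IsRightIdeal

variable {V W : Submodule k A}

theorem IsLeftIdeal.sup (hV : V.IsLeftIdeal) (hW : W.IsLeftIdeal) : (V ⊔ W).IsLeftIdeal := by
  intro a x hx
  obtain ⟨v, hv, w, hw, rfl⟩ := mem_sup.1 hx
  rw [mul_add]
  exact add_mem (mem_sup_left (hV a v hv)) (mem_sup_right (hW a w hw))

theorem IsRightIdeal.sup (hV : V.IsRightIdeal) (hW : W.IsRightIdeal) :
    (V ⊔ W).IsRightIdeal := by
  intro x hx a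
  obtain ⟨v, hv, w, hw, rfl⟩ := mem_sup.1 hx
  rw [add_mul]
  exact add_mem (mem_sup_left (hV v hv a)) (mem_sup_right (hW w hw a))

theorem IsIdeal.sup (hV : V.IsIdeal) (hW : W.IsIdeal) : (V ⊔ W).IsIdeal :=
  ⟨hV.1.sup hW.1, hV.2.sup hW.2⟩

theorem isIdeal_bot : (⊥ : Submodule k A).IsIdeal := by
  constructor <;> intro _ _ _ <;> simp_all

theorem isIdeal_sSup_of_directedOn {S : Set (Submodule k A)} (hne : S.Nonempty)
    (hdir : DirectedOn (· ≤ ·) S) (hS : ∀ V ∈ S, V.IsIdeal) : (sSup S).IsIdeal := by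
  constructor
  · intro a x hx
    obtain ⟨V, hVS, hxV⟩ := (mem_sSup_of_directed hne hdir).1 hx
    exact le_sSup hVS ((hS V hVS).1 a x hxV)
  · intro x hx a
    obtain ⟨V, hVS, hxV⟩ := (mem_sSup_of_directed hne hdir).1 hx
    exact le_sSup hVS ((hS V hVS).2 x hxV a)

theorem isLeftIdeal_range_mulRight [IsScalarTower k A A] (x : A) :
    (LinearMap.range (LinearMap.mulRight k x)).IsLeftIdeal := by
  rintro a _ ⟨b, rfl⟩
  exact ⟨a * b, by simp [mul_assoc]⟩

end Ideals

section Products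

variable {k A : Type*} [CommSemiring k] [NonUnitalSemiring A] [Module k A]
  [SMulCommClass k A A] [IsScalarTower k A A] {M N L V : Submodule k A}

theorem mul_mem_map₂_mul {x y : A} (hx : x ∈ M) (hy : y ∈ N) :
    x * y ∈ map₂ (LinearMap.mul k A) M N :=
  apply_mem_map₂ _ hx hy

theorem map₂_mul_le_iff : map₂ (LinearMap.mul k A) M N ≤ L ↔ ∀ x ∈ M, ∀ y ∈ N, x * y ∈ L :=
  map₂_le

theorem map₂_mul_assoc_le :
    map₂ (LinearMap.mul k A) (map₂ (LinearMap.mul k A) M N) L ≤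
      map₂ (LinearMap.mul k A) M (map₂ (LinearMap.mul k A) N L) := by
  refine map₂_mul_le_iff.2 fun x hx z hz => ?_
  have : map₂ (LinearMap.mul k A) M N ≤
      (map₂ (LinearMap.mul k A) M (map₂ (LinearMap.mul k A) N L)).comap
        (LinearMap.mulRight k z) :=
    map₂_mul_le_iff.2 fun m hm n hn => by
      simpa [mul_assoc] using mul_mem_map₂_mul hm (mul_mem_map₂_mul hn hz)
  exact this hx

theorem IsLeftIdeal.map₂_mul_le (hV : V.IsLeftIdeal) : map₂ (LinearMap.mul k A) N V ≤ V :=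
  map₂_mul_le_iff.2 fun x _ y hy => hV x y hy

theorem IsRightIdeal.map₂_mul_le (hV : V.IsRightIdeal) : map₂ (LinearMap.mul k A) V N ≤ V :=
  map₂_mul_le_iff.2 fun x hx y _ => hV x hx y

theorem map₂_mul_sup_map₂_mul_top_le :
    map₂ (LinearMap.mul k A) (V ⊔ map₂ (LinearMap.mul k A) V ⊤) ⊤ ≤
      map₂ (LinearMap.mul k A) V ⊤ := by
  rw [map₂_sup_left]
  exact sup_le le_rfl (map₂_mul_assoc_le.trans (map₂_le_map₂_right le_top))

theorem isRightIdeal_sup_map₂_mul_top (V : Submodule k A) :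
    (V ⊔ map₂ (LinearMap.mul k A) V ⊤).IsRightIdeal := fun _ hx a =>
  mem_sup_right (map₂_mul_sup_map₂_mul_top_le (mul_mem_map₂_mul hx (mem_top (x := a))))

variable (k A) in
-- `topPow k A n = A ^ (n + 1)`
def topPow : ℕ → Submodule k A
  | 0 => ⊤
  | n + 1 => map₂ (LinearMap.mul k A) (topPow n) ⊤

theorem topPow_succ_le (n : ℕ) : topPow k A (n + 1) ≤ topPow k A n := by
  induction n with
  | zero => exact le_top
  | succ n ih => exact map₂_le_map₂_left ih

theorem topPow_add_succ_le (m n : ℕ) :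
    topPow k A (m + n + 1) ≤ map₂ (LinearMap.mul k A) (topPow k A m) (topPow k A n) := by
  induction n with
  | zero => exact le_rfl
  | succ n ih => exact (map₂_le_map₂_left ih).trans map₂_mul_assoc_le

theorem exists_finset_subset_topPow_le {s : Finset A}
    (hs : NonUnitalAlgebra.adjoin k (s : Set A) = ⊤) (n : ℕ) :
    ∃ t : Finset A, (t : Set A) ⊆ topPow k A n ∧
      topPow k A n ≤ span k t ⊔ map₂ (LinearMap.mul k A) (span k t) ⊤ := by
  classical
  have htop : (⊤ : Submodule k A) = span k (Subsemigroup.closure (s : Set A)) := by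
    rw [← NonUnitalAlgebra.adjoin_eq_span, hs]
    rfl
  induction n with
  | zero =>
    refine ⟨s, fun _ _ => mem_top, htop.le.trans (span_le.2 fun w hw => ?_)⟩
    induction hw using Subsemigroup.closure_induction with
    | mem c hc => exact mem_sup_left (subset_span hc)
    | mul u v _ _ hu => exact isRightIdeal_sup_map₂_mul_top _ u hu v
  | succ n ih =>
    obtain ⟨t, hts, htle⟩ := ih
    refine ⟨t * s, ?_, ?_⟩
    · intro x hx
      obtain ⟨g, hg, c, -, rfl⟩ := Finset.mem_mul.1 hx
      exact mul_mem_map₂_mul (hts hg) mem_top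
    calc topPow k A (n + 1)
        ≤ map₂ (LinearMap.mul k A) (span k t ⊔ map₂ (LinearMap.mul k A) (span k t) ⊤) ⊤ :=
          map₂_le_map₂_left htle
      _ ≤ map₂ (LinearMap.mul k A) (span k t) (span k (Subsemigroup.closure (s : Set A))) := by
          rw [← htop]
          exact map₂_mul_sup_map₂_mul_top_le
      _ ≤ _ := by
          rw [map₂_span_span, span_le]
          rintro _ ⟨g, hg, w, hw, rfl⟩
          induction hw using Subsemigroup.closure_induction with
          | mem c hc => exact mem_sup_left (subset_span (Finset.mem_mul.2 ⟨g, hg, c, hc, rfl⟩))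
          | mul u v _ _ hu _ =>
            simpa [mul_assoc] using isRightIdeal_sup_map₂_mul_top _ (g * u) hu v

theorem exists_finset_span_sup_topPow_eq_top {s : Finset A}
    (hs : NonUnitalAlgebra.adjoin k (s : Set A) = ⊤) (n : ℕ) :
    ∃ T : Finset A, span k (T : Set A) ⊔ topPow k A n = ⊤ := by
  classical
  induction n with
  | zero => exact ⟨∅, top_unique le_sup_right⟩
  | succ n ih =>
    obtain ⟨T, hT⟩ := ih
    obtain ⟨t, hts, htle⟩ := exists_finset_subset_topPow_le hs n
    refine ⟨T ∪ t, top_unique ?_⟩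
    calc ⊤ = span k T ⊔ topPow k A n := hT.symm
      _ ≤ span k T ⊔ (span k t ⊔ topPow k A (n + 1)) :=
          sup_le_sup_left (htle.trans (sup_le_sup_left (map₂_le_map₂_left (span_le.2 hts)) _)) _
      _ = span k ↑(T ∪ t) ⊔ topPow k A (n + 1) := by
          rw [Finset.coe_union, span_union, sup_assoc]

theorem topPow_ne_bot {s : Finset A} (hs : NonUnitalAlgebra.adjoin k (s : Set A) = ⊤)
    (hinf : ¬ Module.Finite k A) (n : ℕ) : topPow k A n ≠ ⊥ := by
  intro hbot
  obtain ⟨T, hT⟩ := exists_finset_span_sup_topPow_eq_top hs n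
  rw [hbot, sup_bot_eq] at hT
  exact hinf ⟨⟨T, hT⟩⟩

theorem exists_maximal_isIdeal_not_topPow_le {s : Finset A}
    (hs : NonUnitalAlgebra.adjoin k (s : Set A) = ⊤) (hinf : ¬ Module.Finite k A) :
    ∃ Q : Submodule k A, Maximal (fun Q => Q.IsIdeal ∧ ∀ n, ¬ topPow k A n ≤ Q) Q := by
  refine (zorn_le_nonempty₀ {Q : Submodule k A | Q.IsIdeal ∧ ∀ n, ¬ topPow k A n ≤ Q}
    (fun c hc hchain Q hQ => ?_) ⊥
    ⟨isIdeal_bot, fun n h => topPow_ne_bot hs hinf n (le_bot_iff.1 h)⟩).imp fun _ h => h.2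
  refine ⟨sSup c, ⟨isIdeal_sSup_of_directedOn ⟨Q, hQ⟩ hchain.directedOn fun V hV => (hc hV).1,
    fun n hn => ?_⟩, fun _ => le_sSup⟩
  -- a finite set generating `topPow k A n` as a right ideal already lies in one member of `c`
  obtain ⟨t, hts, htle⟩ := exists_finset_subset_topPow_le hs n
  obtain ⟨V, hVc, hV⟩ := (CompleteLattice.isCompactElement_iff_le_of_directed_sSup_le _ _).1
    (finset_span_isCompactElement t) c ⟨Q, hQ⟩ hchain.directedOn ((span_le.2 hts).trans hn)
  exact (hc hVc).2 n
    (htle.trans (sup_le hV ((map₂_le_map₂_left hV).trans (hc hVc).1.2.map₂_mul_le)))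

end Products

section Ring

variable {k : Type*} {A : Type} [Ring k] [NonUnitalRing A] [Module k A]
  {Q L : Submodule k A}

theorem IsLeftIdeal.mem_of_sub_mul_mem (hL : L.IsLeftIdeal) {b x : A} (hb : IsNilElem b)
    (hx : x - b * x ∈ L) : x ∈ L := by
  obtain ⟨n, hn⟩ := hb
  have key (m : ℕ) : x - nupow b m * x ∈ L := by
    induction m with
    | zero => exact hx
    | succ m ih =>
      have : x - nupow b (m + 1) * x = (x - nupow b m * x) + nupow b m * (x - b * x) := by
        simp only [nupow, mul_sub, mul_assoc]
        abel
      rw [this]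
      exact add_mem ih (hL _ _ hx)
  simpa [hn] using key n

def IsIdeal.toTwoSidedIdeal (hQ : Q.IsIdeal) : TwoSidedIdeal A :=
  TwoSidedIdeal.mk' Q Q.zero_mem Q.add_mem (fun hx => Q.neg_mem hx) (fun hy => hQ.1 _ _ hy)
    (fun hx => hQ.2 _ hx _)

@[simp]
theorem IsIdeal.mem_toTwoSidedIdeal (hQ : Q.IsIdeal) {x : A} :
    x ∈ hQ.toTwoSidedIdeal ↔ x ∈ Q := by
  rw [toTwoSidedIdeal, TwoSidedIdeal.mem_mk', SetLike.mem_coe]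

end Ring

section Algebra

variable {k : Type*} {A : Type} [CommRing k] [NonUnitalRing A] [Module k A]
  [SMulCommClass k A A] [IsScalarTower k A A] {Q L W : Submodule k A}

theorem isIdeal_span_twoSidedIdeal (I : TwoSidedIdeal A) : (span k (I : Set A)).IsIdeal := by
  constructor
  · intro a x hx
    have : span k (I : Set A) ≤ (span k (I : Set A)).comap (LinearMap.mulLeft k a) :=
      span_le.2 fun y hy => subset_span (I.mul_mem_left a y hy)
    exact this hx
  · intro x hx a
    have : span k (I : Set A) ≤ (span k (I : Set A)).comap (LinearMap.mulRight k a) :=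
      span_le.2 fun y hy => subset_span (I.mul_mem_right y a hy)
    exact this hx

theorem subset_or_subset_of_maximal_not_topPow_le
    (hQ : Maximal (fun Q : Submodule k A => Q.IsIdeal ∧ ∀ n, ¬ topPow k A n ≤ Q) Q)
    (I J : TwoSidedIdeal A) (hIJ : ∀ a ∈ I, ∀ b ∈ J, a * b ∈ Q) :
    (I : Set A) ⊆ Q ∨ (J : Set A) ⊆ Q := by
  have grow {V : Submodule k A} (hV : V.IsIdeal) (hVQ : ¬ V ≤ Q) :
      ∃ n, topPow k A n ≤ Q ⊔ V := by
    by_contra! h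
    exact hVQ (le_sup_right.trans (hQ.2 ⟨hQ.1.1.sup hV, h⟩ le_sup_left))
  by_contra! hIJQ
  obtain ⟨m, hm⟩ := grow (isIdeal_span_twoSidedIdeal I) (by rw [span_le]; exact hIJQ.1)
  obtain ⟨m', hm'⟩ := grow (isIdeal_span_twoSidedIdeal J) (by rw [span_le]; exact hIJQ.2)
  refine hQ.1.2 (m + m' + 1) ((topPow_add_succ_le m m').trans ((map₂_le_map₂ hm hm').trans ?_))
  rw [map₂_sup_left, map₂_sup_right, map₂_sup_right]
  refine sup_le (sup_le hQ.1.1.2.map₂_mul_le hQ.1.1.2.map₂_mul_le)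
    (sup_le hQ.1.1.1.map₂_mul_le ?_)
  rw [map₂_span_span, span_le]
  rintro _ ⟨a, ha, b, hb, rfl⟩
  exact hIJ a ha b hb

theorem IsLeftIdeal.le_of_le_sup_map₂_top [IsNoetherian k (A ⧸ Q)] (hQ : Q.IsLeftIdeal)
    (hnil : ∀ a : A, IsNilElem a) (hW : W ≤ Q ⊔ map₂ (LinearMap.mul k A) ⊤ W) : W ≤ Q := by
  suffices ∀ L, Q ≤ L → L.IsLeftIdeal → W ≤ L from this Q le_rfl hQ
  intro L
  induction L using (InvImage.wf (map Q.mkQ) wellFounded_gt).induction with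
  | _ L ih =>
  intro hQL hL
  by_contra hWL
  obtain ⟨x, hxW, a, hax⟩ : ∃ x ∈ W, ∃ a : A, a * x ∉ L := by
    by_contra! h
    exact hWL (hW.trans (sup_le hQL (map₂_mul_le_iff.2 fun a _ x hx => h x hx a)))
  set L' := L ⊔ LinearMap.range (LinearMap.mulRight k x)
  have hLL' : L < L' := lt_of_le_of_ne le_sup_left fun h => hax (h ▸ mem_sup_right ⟨a, rfl⟩)
  have hmap : map Q.mkQ L < map Q.mkQ L' := by
    refine lt_of_le_of_ne (map_mono hLL'.le) fun h => hLL'.ne ?_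
    have := congrArg (comap Q.mkQ) h
    rwa [comap_map_mkQ, comap_map_mkQ, sup_eq_right.2 hQL,
      sup_eq_right.2 (hQL.trans hLL'.le)] at this
  obtain ⟨l, hl, _, ⟨b, rfl⟩, hlb⟩ :=
    mem_sup.1 (ih L' hmap (hQL.trans hLL'.le) (hL.sup (isLeftIdeal_range_mulRight x)) hxW)
  have hxL : x ∈ L := hL.mem_of_sub_mul_mem (hnil b) (eq_sub_of_add_eq hlb ▸ hl)
  exact hax (hL a x hxL)

end Algebra

theorem exists_topPow_le_of_finiteDimensional_quotient {k : Type*} {A : Type} [Field k]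
    [NonUnitalRing A] [Module k A] [SMulCommClass k A A] [IsScalarTower k A A] {Q : Submodule k A}
    [FiniteDimensional k (A ⧸ Q)] (hQ : Q.IsLeftIdeal) (hnil : ∀ a : A, IsNilElem a) :
    ∃ n, topPow k A n ≤ Q := by
  obtain ⟨_, ⟨n, rfl⟩, hmin⟩ := wellFounded_lt.has_min
    (Set.range fun n => map Q.mkQ (topPow k A n)) (Set.range_nonempty _)
  have hstab : Q ⊔ topPow k A (n + 1) = Q ⊔ topPow k A n := by
    have h : map Q.mkQ (topPow k A (n + 1)) = map Q.mkQ (topPow k A n) :=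
      (map_mono (topPow_succ_le n)).eq_of_not_lt (hmin _ ⟨n + 1, rfl⟩)
    simpa only [comap_map_mkQ] using congrArg (comap Q.mkQ) h
  refine ⟨n, le_sup_right.trans (hQ.le_of_le_sup_map₂_top (W := Q ⊔ topPow k A n) hnil ?_)⟩
  calc Q ⊔ topPow k A n = Q ⊔ topPow k A (0 + n + 1) := by rw [zero_add, hstab]
    _ ≤ Q ⊔ map₂ (LinearMap.mul k A) ⊤ (Q ⊔ topPow k A n) :=
        sup_le_sup_left ((topPow_add_succ_le 0 n).trans (map₂_le_map₂_right le_sup_right)) _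

end Submodule

/-- A finitely generated, infinite-dimensional nil (not necessarily unital)
`k`-algebra `A` has a two-sided ideal `P` (also a `k`-subspace `Pm` with the same
elements) such that `A/P` is a nonzero prime ring and is infinite-dimensional over `k`:
`P ≠ ⊤`, the ideal `P` is prime (so the quotient ring `A/P` is prime), and the quotient
vector space `A ⧸ Pm` is infinite-dimensional. -/
theorem exists_prime_infiniteDim_quotient_of_fg_nil
    (k A : Type) [Field k] [NonUnitalRing A] [Module k A]
    [SMulCommClass k A A] [IsScalarTower k A A]
    (hfg : ∃ s : Finset A, NonUnitalAlgebra.adjoin k (s : Set A) = ⊤)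
    (hinf : ¬ Module.Finite k A)
    (hnil : ∀ a : A, IsNilElem a) :
    ∃ (P : TwoSidedIdeal A) (Pm : Submodule k A),
      (Pm : Set A) = (P : Set A) ∧
      P ≠ ⊤ ∧
      (∀ I J : TwoSidedIdeal A, (∀ a ∈ I, ∀ b ∈ J, a * b ∈ P) → I ≤ P ∨ J ≤ P) ∧
      ¬ Module.Finite k (A ⧸ Pm) := by
  obtain ⟨s, hs⟩ := hfg
  obtain ⟨Q, hQ⟩ := exists_maximal_isIdeal_not_topPow_le hs hinf
  have ⟨hQI, hQpow⟩ := hQ.1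
  refine ⟨hQI.toTwoSidedIdeal, Q, by ext; simp, fun htop => hQpow 0 fun x _ => ?_,
    fun I J hIJ => ?_, fun _ => ?_⟩
  · simpa [htop] using hQI.mem_toTwoSidedIdeal (x := x)
  · simpa [TwoSidedIdeal.le_iff, Set.subset_def] using
      subset_or_subset_of_maximal_not_topPow_le hQ I J (by simpa using hIJ)
  · obtain ⟨n, hn⟩ := exists_topPow_le_of_finiteDimensional_quotient hQI.1 hnil
    exact hQpow n hn
end

section
/- Let S be an associative ring, let e ∈ S be an idempotent, and let P be a proper ideal of the corner ring eSe = {ese : s ∈ S} (a ring with identity e) that is prime in eSe, i.e., for all ideals I, J of eSe, IJ ⊆ P implies I ⊆ P or J ⊆ P. Suppose Q is a two-sided ideal of S that is maximal among two-sided ideals X of S satisfying eXe = P, where eXe = {exe : x ∈ X}. Then Q is a prime ideal of S: Q is proper and for all two-sided ideals I, J of S, IJ ⊆ Q implies I ⊆ Q or J ⊆ Q. -/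
/-!
Pull ideals of `S` back to the corner `eSe`; for any ideal `X` of `S` the set `eXe` is exactly the
pullback of `X`, so `Q` is maximal among the ideals whose pullback is `P`. If `IJ ⊆ Q`, then the
pullbacks of `Q + I` and `Q + J` multiply into the pullback of `Q`, which is `P`; primality of `P`
puts one of them, say that of `Q + I`, inside `P`, and maximality of `Q` forces `Q + I = Q`.
-/

def cornerSubring (S : Type) [Ring S] (e : S) (he : e * e = e) : NonUnitalSubring S where
  carrier := {x | e * x * e = x}
  zero_mem' := by simp
  add_mem' := by
    intro a b ha hb
    simp only [Set.mem_setOf_eq] at *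
    rw [mul_add, add_mul, ha, hb]
  neg_mem' := by
    intro a ha
    simp only [Set.mem_setOf_eq] at *
    rw [mul_neg, neg_mul, ha]
  mul_mem' := by
    intro a b ha hb
    simp only [Set.mem_setOf_eq] at *
    have ea : e * a = a := by
      conv_lhs => rw [← ha]
      rw [← mul_assoc, ← mul_assoc, he]
      exact ha
    have be : b * e = b := by
      conv_lhs => rw [← hb]
      rw [mul_assoc, he]
      exact hb
    rw [← mul_assoc, ea, mul_assoc, be]

namespace TwoSidedIdeal

lemma mul_mem_of_mem_sup {R : Type*} [NonUnitalNonAssocRing R] {Q I J : TwoSidedIdeal R}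
    (hIJ : ∀ a ∈ I, ∀ b ∈ J, a * b ∈ Q) {a b : R} (ha : a ∈ Q ⊔ I) (hb : b ∈ Q ⊔ J) :
    a * b ∈ Q := by
  obtain ⟨q, hq, i, hi, rfl⟩ := mem_sup.1 ha
  obtain ⟨q', hq', j, hj, rfl⟩ := mem_sup.1 hb
  rw [add_mul, mul_add i]
  exact Q.add_mem (Q.mul_mem_right _ _ hq)
    (Q.add_mem (Q.mul_mem_left _ _ hq') (hIJ _ hi _ hj))

lemma comap_top {R S F : Type*} [NonUnitalNonAssocRing R] [NonUnitalNonAssocRing S]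
    [FunLike F R S] [NonUnitalRingHomClass F R S] (f : F) :
    comap f (⊤ : TwoSidedIdeal S) = ⊤ :=
  eq_top_iff.2 fun _ _ => (mem_comap f).2 trivial

end TwoSidedIdeal

section Corner

open TwoSidedIdeal

variable {S : Type} [Ring S] {e : S} (he : e * e = e)

abbrev cornerComap : TwoSidedIdeal S →o TwoSidedIdeal ↥(cornerSubring S e he) :=
  comap (NonUnitalSubringClass.subtype (cornerSubring S e he))

lemma mul_mul_mem_cornerSubring (x : S) : e * x * e ∈ cornerSubring S e he :=
  show e * (e * x * e) * e = e * x * e by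
    simp only [← mul_assoc, he]; rw [mul_assoc _ e e, he]

lemma image_corner_eq_image_comap (X : TwoSidedIdeal S) :
    (fun x => e * x * e) '' (X : Set S) =
      Subtype.val '' (cornerComap he X : Set ↥(cornerSubring S e he)) := by
  ext y
  constructor
  · rintro ⟨x, hx, rfl⟩
    exact ⟨⟨_, mul_mul_mem_cornerSubring he x⟩,
      (mem_comap _).2 (X.mul_mem_right _ _ (X.mul_mem_left _ _ hx)), rfl⟩
  · rintro ⟨a, ha, rfl⟩
    exact ⟨a, (mem_comap _).1 ha, a.2⟩

lemma image_corner_eq_iff (X : TwoSidedIdeal S) (P : TwoSidedIdeal ↥(cornerSubring S e he)) :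
    (fun x => e * x * e) '' (X : Set S) = Subtype.val '' (P : Set ↥(cornerSubring S e he)) ↔
      cornerComap he X = P := by
  rw [image_corner_eq_image_comap he, (Set.image_injective.2 Subtype.val_injective).eq_iff,
    SetLike.coe_set_eq]

end Corner

open TwoSidedIdeal in
/-- If `e` is an idempotent of a ring `S`, `P` is a proper prime ideal of the corner
ring `eSe`, and `Q` is a two-sided ideal of `S` maximal among two-sided ideals `X`
with `eXe = P`, then `Q` is a prime ideal of `S`. -/
theorem prime_of_maximal_with_corner_eq_prime
    (S : Type) [Ring S] (e : S) (he : e * e = e)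
    (P : TwoSidedIdeal ↥(cornerSubring S e he))
    (hPproper : P ≠ ⊤)
    (hPprime : ∀ I J : TwoSidedIdeal ↥(cornerSubring S e he),
      (∀ a ∈ I, ∀ b ∈ J, a * b ∈ P) → I ≤ P ∨ J ≤ P)
    (Q : TwoSidedIdeal S)
    (hQ : (fun x => e * x * e) '' (Q : Set S) =
      Subtype.val '' (P : Set ↥(cornerSubring S e he)))
    (hQmax : ∀ X : TwoSidedIdeal S,
      (fun x => e * x * e) '' (X : Set S) =
        Subtype.val '' (P : Set ↥(cornerSubring S e he)) → Q ≤ X → X = Q) :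
    Q ≠ ⊤ ∧ ∀ I J : TwoSidedIdeal S, (∀ a ∈ I, ∀ b ∈ J, a * b ∈ Q) → I ≤ Q ∨ J ≤ Q := by
  set corner := cornerComap he
  have hQP : corner Q = P := (image_corner_eq_iff he Q P).1 hQ
  have le_of_corner_sup_le : ∀ K, corner (Q ⊔ K) ≤ P → K ≤ Q := fun K hK =>
    have hcorner : corner (Q ⊔ K) = P := le_antisymm hK (hQP ▸ corner.monotone le_sup_left)
    le_sup_right.trans (hQmax _ ((image_corner_eq_iff he _ P).2 hcorner) le_sup_left).le
  refine ⟨fun hQtop => hPproper ?_, fun I J hIJ => ?_⟩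
  · rw [← hQP, hQtop, comap_top]
  · refine (hPprime (corner (Q ⊔ I)) (corner (Q ⊔ J)) fun a ha b hb => ?_).imp
      (le_of_corner_sup_le I) (le_of_corner_sup_le J)
    rw [← hQP]
    exact (mem_comap _).2 (mul_mem_of_mem_sup hIJ ((mem_comap _).1 ha) ((mem_comap _).1 hb))
end

section
/- Let S be an associative ring, let e ∈ S be an idempotent, and let P be an ideal of the corner ring eSe = {ese : s ∈ S}. If Q and Q′ are two-sided ideals of S each maximal among two-sided ideals X of S satisfying eXe = P, where eXe = {exe : x ∈ X}, then Q = Q′. -/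
theorem SupClosed.eq_of_maximal {α : Type*} [SemilatticeSup α] {C : Set α} (hC : SupClosed C)
    {a b : α} (ha : a ∈ C) (ha_max : ∀ x ∈ C, a ≤ x → x = a)
    (hb : b ∈ C) (hb_max : ∀ x ∈ C, b ≤ x → x = b) : a = b :=
  (ha_max _ (hC ha hb) le_sup_left).symm.trans (hb_max _ (hC ha hb) le_sup_right)

theorem TwoSidedIdeal.add_mem_image_val {R : Type*} [NonUnitalNonAssocRing R]
    {A : NonUnitalSubring R} (P : TwoSidedIdeal A) {a b : R}
    (ha : a ∈ Subtype.val '' (P : Set A)) (hb : b ∈ Subtype.val '' (P : Set A)) :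
    a + b ∈ Subtype.val '' (P : Set A) := by
  obtain ⟨a, ha, rfl⟩ := ha
  obtain ⟨b, hb, rfl⟩ := hb
  exact ⟨a + b, P.add_mem ha hb, rfl⟩

theorem TwoSidedIdeal.image_corner_sup_eq {S : Type*} [NonUnitalNonAssocRing S] (e : S) {X Y : TwoSidedIdeal S}
    {T : Set S} (hT : ∀ a ∈ T, ∀ b ∈ T, a + b ∈ T)
    (hX : (fun x => e * x * e) '' (X : Set S) = T) (hY : (fun x => e * x * e) '' (Y : Set S) = T) :
    (fun x => e * x * e) '' ((X ⊔ Y : TwoSidedIdeal S) : Set S) = T := by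
  refine subset_antisymm ?_ (hX ▸ Set.image_mono fun _ => mem_sup_left)
  rintro _ ⟨_, hxy, rfl⟩
  obtain ⟨x, hx, y, hy, rfl⟩ := mem_sup.1 hxy
  show e * (x + y) * e ∈ T
  rw [mul_add, add_mul]
  exact hT _ (hX ▸ Set.mem_image_of_mem _ hx) _ (hY ▸ Set.mem_image_of_mem _ hy)

/-- If `e` is an idempotent of a ring `S` and `P` is an ideal of the corner ring
`eSe`, then a two-sided ideal of `S` maximal among two-sided ideals `X` with
`eXe = P` is unique. -/
theorem unique_maximal_with_corner_eq
    (S : Type) [Ring S] (e : S) (he : e * e = e)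
    (P : TwoSidedIdeal ↥(cornerSubring S e he))
    (Q Q' : TwoSidedIdeal S)
    (hQ : (fun x => e * x * e) '' (Q : Set S) =
      Subtype.val '' (P : Set ↥(cornerSubring S e he)))
    (hQmax : ∀ X : TwoSidedIdeal S,
      (fun x => e * x * e) '' (X : Set S) =
        Subtype.val '' (P : Set ↥(cornerSubring S e he)) → Q ≤ X → X = Q)
    (hQ' : (fun x => e * x * e) '' (Q' : Set S) =
      Subtype.val '' (P : Set ↥(cornerSubring S e he)))
    (hQ'max : ∀ X : TwoSidedIdeal S,
      (fun x => e * x * e) '' (X : Set S) =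
        Subtype.val '' (P : Set ↥(cornerSubring S e he)) → Q' ≤ X → X = Q') :
    Q = Q' := by
  have hC : SupClosed {X : TwoSidedIdeal S | (fun x => e * x * e) '' (X : Set S) =
      Subtype.val '' (P : Set ↥(cornerSubring S e he))} := fun _ hX _ hY =>
    TwoSidedIdeal.image_corner_sup_eq e (fun _ ha _ hb => P.add_mem_image_val ha hb) hX hY
  exact hC.eq_of_maximal hQ hQmax hQ' hQ'max
end

section
/- Let k be a countable field. Then there exists a finitely generated unital associative k-algebra A with Gelfand–Kirillov dimension at most six such that A has a two-sided ideal J in which every element is nilpotent but which is not nilpotent as an ideal, and A has no maximal nilpotent two-sided ideal: for every nilpotent two-sided ideal N of A there exists a nilpotent two-sided ideal N′ of A with N properly contained in N′. -/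
/-- `gkDimLE k A c` expresses that the Gelfand–Kirillov dimension of the unital
associative `k`-algebra `A` is at most `c`: there is a finite-dimensional generating
subspace `V` containing `1` with `limsup_n log(dim V^n)/log n ≤ c`. -/
noncomputable def gkDimLE (k A : Type) [Field k] [Ring A] [Algebra k A] (c : ℝ) : Prop :=
  ∃ V : Submodule k A,
    Module.Finite k ↥V ∧ (1 : A) ∈ V ∧ Algebra.adjoin k (V : Set A) = ⊤ ∧
    Filter.limsup (fun n : ℕ =>
      ((Real.log (Module.finrank k ↥(V ^ n)) / Real.log n : ℝ) : EReal)) Filter.atTop ≤ (c : EReal)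

/-- A two-sided ideal `N` is nilpotent if for some positive `m` every product of `m`
elements of `N` vanishes (i.e. `N ^ m = 0`). -/
def IsNilpotentTwoSidedIdeal {A : Type} [Ring A] (N : TwoSidedIdeal A) : Prop :=
  ∃ m : ℕ, 0 < m ∧ ∀ f : Fin m → A, (∀ i, f i ∈ N) → (List.ofFn f).prod = 0

/-!
Take `A = k⟨x, y⟩ / (bad words)`, where the word `x^a y x^g₁ y x^g₂ y ⋯ y x^gᵣ y x^b` is good
when its gaps decrease by exactly one, `g₁ = g₂ + 1 = g₃ + 2 = ⋯`. Good words are closed under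
taking factors, so good words form a basis of `A`.

A good word is determined by its number of `y`s, its first run, its first gap and its length, all
bounded by the length, so `dim Vⁿ ≤ (n + 1)⁴ ≤ n⁶` for `V = span {1, x, y}` and large `n`.

In a good word the number of `y`s is at most the first gap plus two. A product of `2L + 3` words
containing `y`, each of length at most `L`, has first gap at most `2L`, hence is bad: the ideal
spanned by the words containing `y` is nil. It is not nilpotent, because
`(y x^(2m-1) y x^(2m-2)) ⋯ (y x³ y x²) (y x y)` is a good product of `m` of its elements. The same
product shows that a nilpotent ideal `N` misses some `y x^s y`. The gaps of a good word are
distinct, so the words with a gap equal to `s` span an ideal of square zero, and adding it to `N`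
gives a strictly larger nilpotent ideal.
-/

open Module Submodule
open scoped Pointwise

section NilpotentIdeals

theorem isNilpotentTwoSidedIdeal_iff_pow_eq_bot {R A : Type} [CommRing R] [Ring A] [Algebra R A]
    (N : TwoSidedIdeal A) :
    IsNilpotentTwoSidedIdeal N ↔ ∃ m, 0 < m ∧ (N.asIdeal.restrictScalars R) ^ m = ⊥ := by
  refine exists_congr fun m => and_congr_right fun _ => ?_
  rw [pow_eq_span_pow_set, span_eq_bot]
  constructor
  · intro h x hx
    obtain ⟨f, rfl⟩ := Set.mem_pow.1 hx
    exact h _ fun i => (f i).2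
  · intro h f hf
    exact h _ (Set.mem_pow.2 ⟨fun i => ⟨f i, hf i⟩, rfl⟩)

theorem Submodule.sup_pow_le_pow_sup {R A : Type*} [CommSemiring R] [Semiring A] [Algebra R A]
    {P Q : Submodule R A} (hQl : ∀ X : Submodule R A, X * Q ≤ Q)
    (hQr : ∀ X : Submodule R A, Q * X ≤ Q) (j : ℕ) : (P ⊔ Q) ^ j ≤ P ^ j ⊔ Q := by
  induction j with
  | zero => simp
  | succ j ih =>
    calc (P ⊔ Q) ^ (j + 1) ≤ (P ⊔ Q) * (P ^ j ⊔ Q) := by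
          rw [pow_succ']; exact mul_le_mul' le_rfl ih
      _ = P ^ (j + 1) ⊔ P * Q ⊔ (Q * P ^ j ⊔ Q * Q) := by
          rw [sup_mul, mul_sup, mul_sup, pow_succ']
      _ ≤ P ^ (j + 1) ⊔ Q :=
          sup_le (sup_le le_sup_left (le_sup_of_le_right (hQl P)))
            (sup_le (le_sup_of_le_right (hQr _)) (le_sup_of_le_right (hQr Q)))

theorem IsNilpotentTwoSidedIdeal.sup_of_mul_eq_zero {A : Type} [Ring A] {N I : TwoSidedIdeal A}
    (hN : IsNilpotentTwoSidedIdeal N) (hI : ∀ a ∈ I, ∀ b ∈ I, a * b = 0) :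
    IsNilpotentTwoSidedIdeal (N ⊔ I) := by
  -- every ring is a `ℤ`-algebra, so its ideals can be multiplied as `ℤ`-submodules
  rw [isNilpotentTwoSidedIdeal_iff_pow_eq_bot (R := ℤ)] at hN ⊢
  obtain ⟨m, hm, hNm⟩ := hN
  set P := N.asIdeal.restrictScalars ℤ
  set Q := I.asIdeal.restrictScalars ℤ
  have hsup : (N ⊔ I).asIdeal.restrictScalars ℤ ≤ P ⊔ Q := fun x hx => by
    obtain ⟨y, hy, z, hz, rfl⟩ := TwoSidedIdeal.mem_sup.1 hx
    exact add_mem_sup hy hz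
  have hQl (X : Submodule ℤ A) : X * Q ≤ Q := mul_le.2 fun x _ y hy => I.mul_mem_left x y hy
  have hQr (X : Submodule ℤ A) : Q * X ≤ Q := mul_le.2 fun x hx y _ => I.mul_mem_right x y hx
  have hPQ : (P ⊔ Q) ^ m ≤ Q := by simpa [hNm] using sup_pow_le_pow_sup (P := P) hQl hQr m
  refine ⟨2 * m, by omega, eq_bot_iff.2 ?_⟩
  calc _ ≤ (P ⊔ Q) ^ (m * 2) := by rw [mul_comm]; gcongr
    _ = (P ⊔ Q) ^ m * (P ⊔ Q) ^ m := by rw [pow_mul, sq]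
    _ ≤ Q * Q := mul_le_mul' hPQ hPQ
    _ ≤ ⊥ := mul_le.2 fun a ha b hb => (mem_bot ℤ).2 (hI a ha b hb)

end NilpotentIdeals

section GelfandKirillovDimension

theorem finrank_span_image_le_ncard {k V ι : Type*} [Field k] [AddCommGroup V] [Module k V]
    (f : ι → V) {T : Set ι} (hT : T.Finite) : finrank k (span k (f '' T)) ≤ T.ncard := by
  classical
  rw [← hT.coe_toFinset, ← Finset.coe_image, Set.ncard_coe_finset]
  exact (finrank_span_finset_le_card _).trans Finset.card_image_le

theorem gkDimLE_of_eventually_finrank_pow_le {k A : Type} [Field k] [Ring A] [Algebra k A]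
    (V : Submodule k A) (hV : Module.Finite k V) (h1 : 1 ∈ V)
    (hgen : Algebra.adjoin k (V : Set A) = ⊤) (d : ℕ)
    (h : ∀ᶠ n in Filter.atTop, finrank k ↥(V ^ n) ≤ n ^ d) : gkDimLE k A d := by
  refine ⟨V, hV, h1, hgen, Filter.limsup_le_of_le (by isBoundedDefault) ?_⟩
  filter_upwards [h, Filter.eventually_gt_atTop 1] with n hn hn1
  have hlog : 0 < Real.log n := Real.log_pos (by exact_mod_cast hn1)
  rw [EReal.coe_le_coe_iff, div_le_iff₀ hlog]
  rcases Nat.eq_zero_or_pos (finrank k ↥(V ^ n)) with h0 | h0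
  · rw [h0, Nat.cast_zero, Real.log_zero]
    positivity
  · calc Real.log (finrank k ↥(V ^ n)) ≤ Real.log ((n : ℝ) ^ d) :=
          Real.log_le_log (by exact_mod_cast h0) (by exact_mod_cast hn)
      _ = d * Real.log n := by rw [Real.log_pow]

end GelfandKirillovDimension

noncomputable section MonomialAlgebra

variable (k : Type) [CommRing k] {M : Type} [Monoid M]

def IsFactorClosed (S : Set M) : Prop := ∀ ⦃u v : M⦄, u * v ∈ S → u ∈ S ∧ v ∈ S

def IsMulIdeal (T : Set M) : Prop := ∀ u v, v ∈ T → u * v ∈ T ∧ v * u ∈ T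

open scoped Classical in
def wordOp (S : Set M) (u : M) : Module.End k (S → k) where
  toFun f w := if h : (w : M) * u ∈ S then f ⟨_, h⟩ else 0
  map_add' f g := by ext w; by_cases h : (w : M) * u ∈ S <;> simp [h]
  map_smul' c f := by ext w; by_cases h : (w : M) * u ∈ S <;> simp [h]

variable {k} {S : Set M}

theorem wordOp_apply_of_mem {u : M} (f : S → k) {w : S} (h : (w : M) * u ∈ S) :
    wordOp k S u f w = f ⟨_, h⟩ := dif_pos h

theorem wordOp_apply_of_notMem {u : M} (f : S → k) {w : S} (h : (w : M) * u ∉ S) :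
    wordOp k S u f w = 0 := dif_neg h

theorem wordOp_mul (hS : IsFactorClosed S) (u v : M) :
    wordOp k S (u * v) = wordOp k S u * wordOp k S v := by
  ext f w
  rw [Module.End.mul_apply]
  by_cases h : (w : M) * u * v ∈ S
  · rw [wordOp_apply_of_mem _ (by rwa [← mul_assoc]), wordOp_apply_of_mem _ (hS h).1,
      wordOp_apply_of_mem _ h]
    simp only [mul_assoc]
  · rw [wordOp_apply_of_notMem _ (by rwa [← mul_assoc])]
    by_cases hu : (w : M) * u ∈ S
    · rw [wordOp_apply_of_mem _ hu, wordOp_apply_of_notMem _ h]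
    · rw [wordOp_apply_of_notMem _ hu]

theorem wordOp_eq_zero (hS : IsFactorClosed S) {u : M} (hu : u ∉ S) : wordOp k S u = 0 := by
  ext f w
  exact wordOp_apply_of_notMem f fun h => hu (hS h).2

theorem wordOp_ne_zero [Nontrivial k] (hS : IsFactorClosed S) {u : M} (hu : u ∈ S) :
    wordOp k S u ≠ 0 := by
  classical
  have h1 : (1 : M) ∈ S := (hS (by rwa [one_mul])).1
  intro h
  have := congr_fun (LinearMap.congr_fun h (Pi.single ⟨u, hu⟩ 1)) ⟨1, h1⟩
  rw [wordOp_apply_of_mem _ (by rwa [one_mul])] at this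
  simp at this

/-- The monomial algebra `k[M] / span (M ∖ S)`, realised faithfully by its right action on
functions on `S`. -/
def MonomialAlgebra (k : Type) [CommRing k] (S : Set M) : Type :=
  Algebra.adjoin k (Set.range (wordOp k S))

instance : Ring (MonomialAlgebra k S) := inferInstanceAs (Ring (Algebra.adjoin k _))

instance : Algebra k (MonomialAlgebra k S) := inferInstanceAs (Algebra k (Algebra.adjoin k _))

variable (k) in
def ofWord (hS : IsFactorClosed S) : M →* MonomialAlgebra k S where
  toFun u := (⟨wordOp k S u, Algebra.subset_adjoin ⟨u, rfl⟩⟩ :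
    Algebra.adjoin k (Set.range (wordOp k S)))
  map_one' := Subtype.ext <| by
    ext f w
    rw [wordOp_apply_of_mem f (by simp)]
    simp only [mul_one]
    rfl
  map_mul' u v := Subtype.ext (wordOp_mul hS u v)

variable (hS : IsFactorClosed S)

theorem ofWord_eq_zero {u : M} (hu : u ∉ S) : ofWord k hS u = 0 :=
  Subtype.ext (wordOp_eq_zero hS hu)

theorem ofWord_ne_zero [Nontrivial k] {u : M} (hu : u ∈ S) : ofWord k hS u ≠ 0 :=
  fun h => wordOp_ne_zero hS hu (congr_arg Subtype.val h)

theorem mul_mem_span_range_ofWord {a b : MonomialAlgebra k S}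
    (ha : a ∈ span k (Set.range (ofWord k hS))) (hb : b ∈ span k (Set.range (ofWord k hS))) :
    a * b ∈ span k (Set.range (ofWord k hS)) := by
  have hab := mul_mem_mul ha hb
  rw [span_mul_span] at hab
  refine span_mono ?_ hab
  rintro _ ⟨_, ⟨u, rfl⟩, _, ⟨v, rfl⟩, rfl⟩
  exact ⟨u * v, map_mul _ u v⟩

theorem algebraMap_eq_smul_ofWord_one (r : k) :
    algebraMap k (MonomialAlgebra k S) r = r • ofWord k hS 1 := by
  rw [map_one, Algebra.algebraMap_eq_smul_one]

theorem span_range_ofWord : span k (Set.range (ofWord k hS)) = ⊤ := by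
  refine eq_top_iff.2 fun a _ => ?_
  obtain ⟨a, ha⟩ := a
  refine Algebra.adjoin_induction
    (p := fun x hx => (⟨x, hx⟩ : MonomialAlgebra k S) ∈ span k (Set.range (ofWord k hS)))
    ?_ (fun r => ?_) (fun _ _ _ _ hx hy => add_mem hx hy)
    (fun _ _ _ _ hx hy => mul_mem_span_range_ofWord hS hx hy) ha
  · rintro _ ⟨u, rfl⟩
    exact subset_span ⟨u, rfl⟩
  · have h := smul_mem (span k (Set.range (ofWord k hS))) r (subset_span ⟨1, rfl⟩)
    rwa [← algebraMap_eq_smul_ofWord_one] at h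

theorem mem_span_range_ofWord (a : MonomialAlgebra k S) :
    a ∈ span k (Set.range (ofWord k hS)) := by
  rw [span_range_ofWord]; trivial

theorem IsMulIdeal.mul_mem_span_ofWord_image {T : Set M} (hT : IsMulIdeal T)
    (a : MonomialAlgebra k S) {b : MonomialAlgebra k S} (hb : b ∈ span k (ofWord k hS '' T)) :
    a * b ∈ span k (ofWord k hS '' T) ∧ b * a ∈ span k (ofWord k hS '' T) := by
  have hab := mul_mem_mul (mem_span_range_ofWord hS a) hb
  have hba := mul_mem_mul hb (mem_span_range_ofWord hS a)
  rw [span_mul_span] at hab hba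
  constructor
  · refine span_le.2 ?_ hab
    rintro _ ⟨_, ⟨u, rfl⟩, _, ⟨v, hv, rfl⟩, rfl⟩
    exact subset_span ⟨u * v, (hT u v hv).1, map_mul _ u v⟩
  · refine span_le.2 ?_ hba
    rintro _ ⟨_, ⟨v, hv, rfl⟩, _, ⟨u, rfl⟩, rfl⟩
    exact subset_span ⟨v * u, (hT u v hv).2, map_mul _ v u⟩

def wordIdeal (hS : IsFactorClosed S) (T : Set M) (hT : IsMulIdeal T) :
    TwoSidedIdeal (MonomialAlgebra k S) :=
  .mk' (span k (ofWord k hS '' T) : Set (MonomialAlgebra k S)) (zero_mem _) add_mem neg_mem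
    (fun hb => (hT.mul_mem_span_ofWord_image hS _ hb).1)
    (fun hb => (hT.mul_mem_span_ofWord_image hS _ hb).2)

theorem mem_wordIdeal {T : Set M} {hT : IsMulIdeal T} {a : MonomialAlgebra k S} :
    a ∈ wordIdeal hS T hT ↔ a ∈ span k (ofWord k hS '' T) :=
  TwoSidedIdeal.mem_mk' ..

theorem ofWord_mem_wordIdeal {T : Set M} {hT : IsMulIdeal T} {u : M} (hu : u ∈ T) :
    ofWord k hS u ∈ wordIdeal hS T hT :=
  (mem_wordIdeal hS).2 (subset_span ⟨u, hu, rfl⟩)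

theorem pow_eq_zero_of_mem_span_ofWord {F : Set M} {n : ℕ} (hF : ∀ w ∈ F ^ n, w ∉ S)
    {a : MonomialAlgebra k S} (ha : a ∈ span k (ofWord k hS '' F)) : a ^ n = 0 := by
  have han := pow_mem_pow _ ha n
  rw [span_pow, ← Set.image_pow] at han
  refine (mem_bot k).1 (span_le.2 ?_ han)
  rintro _ ⟨w, hw, rfl⟩
  exact ofWord_eq_zero hS (hF w hw)

theorem not_isNilpotentTwoSidedIdeal_of_forall_exists_prod_mem [Nontrivial k]
    (I : TwoSidedIdeal (MonomialAlgebra k S))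
    (h : ∀ m, ∃ l : List M, l.length = m ∧ (∀ u ∈ l, ofWord k hS u ∈ I) ∧ l.prod ∈ S) :
    ¬ IsNilpotentTwoSidedIdeal I := by
  rintro ⟨m, -, hm⟩
  obtain ⟨l, rfl, hlI, hlS⟩ := h m
  have hprod := hm (fun i => ofWord k hS (l.get i)) fun i => hlI _ (List.get_mem l i)
  rw [← Function.comp_def, ← List.map_ofFn, List.ofFn_get, ← map_list_prod] at hprod
  exact ofWord_ne_zero hS hlS hprod

theorem span_ofWord_image_inter (T : Set M) :
    span k (ofWord k hS '' (S ∩ T)) = span k (ofWord k hS '' T) := by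
  refine le_antisymm (span_mono (Set.image_mono Set.inter_subset_right)) (span_le.2 ?_)
  rintro _ ⟨w, hw, rfl⟩
  by_cases hwS : w ∈ S
  · exact subset_span ⟨w, ⟨hwS, hw⟩, rfl⟩
  · rw [ofWord_eq_zero hS hwS]
    exact zero_mem _

theorem adjoin_ofWord_image_eq_top {X : Set M} (hX : Submonoid.closure X = ⊤) :
    Algebra.adjoin k (ofWord k hS '' X) = ⊤ := by
  refine eq_top_iff.2 fun a _ => ?_
  rw [← Subalgebra.mem_toSubmodule, Algebra.adjoin_eq_span]
  refine span_mono ?_ (mem_span_range_ofWord hS a)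
  rintro _ ⟨u, rfl⟩
  rw [← MonoidHom.map_mclosure, hX]
  exact Submonoid.mem_map_of_mem _ trivial

end MonomialAlgebra

theorem List.length_le_headD_add_one_of_isChain {l : List ℕ}
    (h : l.IsChain fun p q => p = q + 1) : l.length ≤ l.headD 0 + 1 := by
  induction l with
  | nil => simp
  | cons g t ih =>
    have := ih h.tail
    cases t <;> simp_all [List.isChain_cons_cons]

theorem List.eq_of_isChain_succ {l₁ l₂ : List ℕ} (h₁ : l₁.IsChain fun p q => p = q + 1)
    (h₂ : l₂.IsChain fun p q => p = q + 1) (hhead : l₁.headD 0 = l₂.headD 0)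
    (hlen : l₁.length = l₂.length) : l₁ = l₂ := by
  induction l₁ generalizing l₂ with
  | nil => exact (List.length_eq_zero_iff.1 hlen.symm).symm
  | cons g t ih =>
    obtain _ | ⟨g₂, t₂⟩ := l₂
    · simp at hlen
    simp only [List.headD_cons, List.length_cons, Nat.add_right_cancel_iff] at hhead hlen
    subst hhead
    refine congrArg _ (ih h₁.tail h₂.tail ?_ hlen)
    obtain _ | ⟨g', t'⟩ := t <;> obtain _ | ⟨g₂', t₂'⟩ := t₂
    · rfl
    all_goals simp only [List.length_cons, List.length_nil, List.isChain_cons_cons,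
      List.headD_cons] at hlen h₁ h₂ ⊢
    all_goals omega

/-- `xPow a` encodes `x ^ a`, and `mk a gs b` encodes `x^a y x^g₁ y ⋯ y x^gₖ y x^b` for
`gs = [g₁, …, gₖ]`: a word in two letters is stored through its runs of `x`. -/
inductive XYWord
  | xPow : ℕ → XYWord
  | mk : ℕ → List ℕ → ℕ → XYWord

namespace XYWord

section Words

instance : Mul XYWord where
  mul
    | xPow a, xPow b => xPow (a + b)
    | xPow a, mk c gs d => mk (a + c) gs d
    | mk a gs b, xPow c => mk a gs (b + c)
    | mk a gs b, mk c hs d => mk a (gs ++ (b + c) :: hs) d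

@[simp] theorem xPow_mul_xPow (a b : ℕ) : xPow a * xPow b = xPow (a + b) := rfl

@[simp] theorem xPow_mul_mk (a c : ℕ) (gs : List ℕ) (d : ℕ) :
    xPow a * mk c gs d = mk (a + c) gs d := rfl

@[simp] theorem mk_mul_xPow (a : ℕ) (gs : List ℕ) (b c : ℕ) :
    mk a gs b * xPow c = mk a gs (b + c) := rfl

@[simp] theorem mk_mul_mk (a : ℕ) (gs : List ℕ) (b c : ℕ) (hs : List ℕ) (d : ℕ) :
    mk a gs b * mk c hs d = mk a (gs ++ (b + c) :: hs) d := rfl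

instance : One XYWord := ⟨xPow 0⟩

theorem one_def : (1 : XYWord) = xPow 0 := rfl

instance : Monoid XYWord where
  mul_assoc u v w := by cases u <;> cases v <;> cases w <;> simp [add_assoc]
  one_mul u := by cases u <;> simp [one_def]
  mul_one u := by cases u <;> simp [one_def]

def x : XYWord := xPow 1

def y : XYWord := mk 0 [] 0

def yxy (s : ℕ) : XYWord := mk 0 [s] 0

def countY : XYWord → ℕ
  | xPow _ => 0
  | mk _ gs _ => gs.length + 1

def firstRun : XYWord → ℕ
  | xPow a => a
  | mk a _ _ => a

def gaps : XYWord → List ℕ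
  | xPow _ => []
  | mk _ gs _ => gs

def length : XYWord → ℕ
  | xPow a => a
  | mk a gs b => a + gs.sum + b + gs.length + 1

def Good (w : XYWord) : Prop := (gaps w).IsChain fun p q => p = q + 1

@[simp] theorem countY_mul (u v : XYWord) : countY (u * v) = countY u + countY v := by
  cases u <;> cases v <;> simp only [countY, List.length_append, List.length_cons] <;> omega

@[simp] theorem length_mul (u v : XYWord) : length (u * v) = length u + length v := by
  cases u <;> cases v <;>
    simp only [length, List.sum_append, List.sum_cons, List.length_append, List.length_cons] <;>
    omega

theorem xPow_eq_pow (a : ℕ) : xPow a = x ^ a := by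
  induction a with
  | zero => rfl
  | succ a ih => rw [pow_succ, ← ih]; rfl

theorem mk_nil (a b : ℕ) : mk a [] b = xPow a * y * xPow b := by simp [y]

theorem mk_cons (a g : ℕ) (gs : List ℕ) (b : ℕ) :
    mk a (g :: gs) b = xPow a * y * mk g gs b := by
  simp [y]

theorem closure_x_y : Submonoid.closure {x, y} = ⊤ := by
  have hx : x ∈ Submonoid.closure {x, y} := Submonoid.subset_closure (by simp)
  have hy : y ∈ Submonoid.closure {x, y} := Submonoid.subset_closure (by simp)
  have hxPow (a : ℕ) : xPow a ∈ Submonoid.closure {x, y} := xPow_eq_pow a ▸ pow_mem hx a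
  refine eq_top_iff.2 ?_
  rintro (a | ⟨a, gs, b⟩) -
  · exact hxPow a
  induction gs generalizing a with
  | nil => rw [mk_nil]; exact mul_mem (mul_mem (hxPow a) hy) (hxPow b)
  | cons g gs ih => rw [mk_cons]; exact mul_mem (mul_mem (hxPow a) hy) (ih g)

theorem gaps_prefix_mul (u v : XYWord) : gaps u <+: gaps (u * v) := by
  cases u <;> cases v <;> simp [gaps]

theorem gaps_suffix_mul (u v : XYWord) : gaps v <:+ gaps (u * v) := by
  cases u <;> cases v
  · exact List.suffix_rfl
  · exact List.suffix_rfl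
  · exact List.nil_suffix
  · exact (List.suffix_cons _ _).trans (List.suffix_append _ _)

theorem gaps_append_sublist_gaps_mul (u v : XYWord) :
    (gaps u ++ gaps v).Sublist (gaps (u * v)) := by
  cases u <;> cases v <;> simp [gaps]

theorem isFactorClosed_good : IsFactorClosed {w : XYWord | Good w} := fun u v h =>
  ⟨List.IsChain.prefix h (gaps_prefix_mul u v), List.IsChain.suffix h (gaps_suffix_mul u v)⟩

theorem Good.nodup_gaps {w : XYWord} (h : Good w) : (gaps w).Nodup := by
  have : (gaps w).IsChain (· > ·) := h.imp fun p q hpq => by omega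
  exact (List.isChain_iff_pairwise.1 this).imp ne_of_gt

theorem not_good_mul_of_mem_gaps {s : ℕ} {u v : XYWord} (hu : s ∈ gaps u) (hv : s ∈ gaps v) :
    ¬ Good (u * v) := fun h =>
  List.disjoint_of_nodup_append ((gaps_append_sublist_gaps_mul u v).nodup h.nodup_gaps) hu hv

theorem Good.countY_le {w : XYWord} (h : Good w) : countY w ≤ (gaps w).headD 0 + 2 := by
  cases w with
  | xPow a => simp [countY]
  | mk a gs b => simpa [countY, gaps] using List.length_le_headD_add_one_of_isChain h

theorem countY_le_length (w : XYWord) : countY w ≤ length w := by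
  cases w <;> simp [countY, length]

theorem firstRun_le_length (w : XYWord) : firstRun w ≤ length w := by
  cases w <;> simp only [firstRun, length] <;> omega

theorem headD_gaps_le_length (w : XYWord) : (gaps w).headD 0 ≤ length w := by
  cases w with
  | xPow a => simp [gaps]
  | mk a gs b =>
    cases gs with
    | nil => simp [gaps]
    | cons g t => simp only [gaps, List.headD_cons, length, List.sum_cons]; omega

theorem headD_gaps_mul {u : XYWord} (hu : 2 ≤ countY u) (v : XYWord) :
    (gaps (u * v)).headD 0 = (gaps u).headD 0 := by
  obtain ⟨t, ht⟩ := gaps_prefix_mul u v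
  rw [← ht]
  cases u with
  | xPow a => simp [countY] at hu
  | mk a gs b => cases gs with
    | nil => simp [countY] at hu
    | cons g gs => rfl

theorem length_le_of_mem_pow {F : Set XYWord} {L : ℕ} (hF : ∀ w ∈ F, length w ≤ L)
    {n : ℕ} {w : XYWord} (hw : w ∈ F ^ n) : length w ≤ n * L := by
  induction n generalizing w with
  | zero => simp_all [Set.mem_one, one_def, length]
  | succ n ih =>
    obtain ⟨u, hu, v, hv, rfl⟩ := Set.mem_mul.1 (pow_succ F n ▸ hw)
    rw [length_mul, add_mul, one_mul]
    exact add_le_add (ih hu) (hF v hv)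

theorem le_countY_of_mem_pow {F : Set XYWord} (hF : ∀ w ∈ F, 1 ≤ countY w)
    {n : ℕ} {w : XYWord} (hw : w ∈ F ^ n) : n ≤ countY w := by
  induction n generalizing w with
  | zero => exact Nat.zero_le _
  | succ n ih =>
    obtain ⟨u, hu, v, hv, rfl⟩ := Set.mem_mul.1 (pow_succ F n ▸ hw)
    rw [countY_mul]
    exact add_le_add (ih hu) (hF v hv)

theorem not_good_of_mem_pow {F : Set XYWord} {L : ℕ}
    (hF : ∀ w ∈ F, 1 ≤ countY w ∧ length w ≤ L) {w : XYWord} (hw : w ∈ F ^ (2 * L + 3)) :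
    ¬ Good w := by
  intro hgood
  have hcount := le_countY_of_mem_pow (fun w hw => (hF w hw).1) hw
  rw [show 2 * L + 3 = 2 + (2 * L + 1) by ring, pow_add] at hw
  obtain ⟨u, hu, v, -, rfl⟩ := Set.mem_mul.1 hw
  have hu₁ := le_countY_of_mem_pow (fun w hw => (hF w hw).1) hu
  have hu₂ := length_le_of_mem_pow (fun w hw => (hF w hw).2) hu
  have hhead := headD_gaps_le_length u
  have := hgood.countY_le
  rw [headD_gaps_mul hu₁] at this
  omega

theorem injOn_good :
    Set.InjOn (fun w => (countY w, firstRun w, (gaps w).headD 0, length w)) {w | Good w} := by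
  rintro (a | ⟨a, gs, b⟩) hu (c | ⟨c, hs, d⟩) hv h
  all_goals simp only [countY, firstRun, gaps, length, Prod.mk.injEq] at h
  · rw [h.2.2.2]
  · omega
  · omega
  · obtain ⟨hlen, rfl, hhead, hlength⟩ := h
    obtain rfl : gs = hs := List.eq_of_isChain_succ hu hv hhead (by omega)
    rw [show b = d by omega]

theorem finite_good_length_le_and_ncard_le (n : ℕ) :
    ({w | Good w} ∩ {w | length w ≤ n}).Finite ∧
      ({w | Good w} ∩ {w | length w ≤ n}).ncard ≤ (n + 1) ^ 4 := by
  set box := Finset.range (n + 1) ×ˢ Finset.range (n + 1) ×ˢ Finset.range (n + 1) ×ˢ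
    Finset.range (n + 1)
  have hmaps : ∀ w ∈ ({w | Good w} ∩ {w | length w ≤ n}),
      (countY w, firstRun w, (gaps w).headD 0, length w) ∈ (box : Set (ℕ × ℕ × ℕ × ℕ)) := by
    rintro w ⟨-, hw : length w ≤ n⟩
    have := countY_le_length w
    have := firstRun_le_length w
    have := headD_gaps_le_length w
    simp only [box, Finset.coe_product, Set.mem_prod, Finset.coe_range, Set.mem_Iio]
    omega
  have hinj : Set.InjOn _ ({w | Good w} ∩ {w | length w ≤ n}) :=
    injOn_good.mono Set.inter_subset_left
  refine ⟨Set.Finite.of_finite_image (box.finite_toSet.subset ?_) hinj, ?_⟩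
  · rintro _ ⟨w, hw, rfl⟩
    exact hmaps w hw
  · refine (Set.ncard_le_ncard_of_injOn _ hmaps hinj box.finite_toSet).trans_eq ?_
    rw [Set.ncard_coe_finset, Finset.card_product, Finset.card_product, Finset.card_product,
      Finset.card_range]
    ring

def staircase : ℕ → List XYWord
  | 0 => []
  | m + 1 => yxy (2 * m + 1) * xPow (2 * m) :: staircase m

theorem length_staircase (m : ℕ) : (staircase m).length = m := by
  induction m with
  | zero => rfl
  | succ m ih => simp [staircase, ih]

theorem prod_staircase_succ (m : ℕ) : ∃ gs, (staircase (m + 1)).prod = mk 0 ((2 * m + 1) :: gs) 0 ∧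
    Good (mk 0 ((2 * m + 1) :: gs) 0) := by
  induction m with
  | zero => exact ⟨[], by simp [staircase, yxy], List.isChain_singleton _⟩
  | succ m ih =>
    obtain ⟨gs, hprod, hgood⟩ := ih
    refine ⟨(2 * m + 2) :: (2 * m + 1) :: gs, ?_, ?_⟩
    · rw [staircase, List.prod_cons, hprod, yxy, mk_mul_xPow, mk_mul_mk]
      simp only [List.cons_append, List.nil_append, zero_add]
      ring_nf
    · exact List.isChain_cons_cons.2 ⟨rfl, List.isChain_cons_cons.2 ⟨rfl, hgood⟩⟩

theorem good_prod_staircase (m : ℕ) : Good (staircase m).prod := by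
  obtain _ | m := m
  · exact List.isChain_nil
  obtain ⟨gs, hprod, hgood⟩ := prod_staircase_succ m
  rwa [hprod]

theorem exists_eq_yxy_mul_of_mem_staircase {m : ℕ} {u : XYWord} (hu : u ∈ staircase m) :
    ∃ s v, u = yxy s * v := by
  induction m with
  | zero => simp [staircase] at hu
  | succ m ih =>
    rcases List.mem_cons.1 hu with rfl | hu
    · exact ⟨_, _, rfl⟩
    · exact ih hu

end Words

section GoodAlgebra

variable (k : Type) [CommRing k]

abbrev GoodAlgebra : Type := MonomialAlgebra k {w : XYWord | Good w}

noncomputable abbrev toGoodAlgebra : XYWord →* GoodAlgebra k := ofWord k isFactorClosed_good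

noncomputable def yIdeal : TwoSidedIdeal (GoodAlgebra k) :=
  wordIdeal isFactorClosed_good {w | 1 ≤ countY w} fun u v (hv : 1 ≤ countY v) =>
    ⟨show 1 ≤ countY (u * v) by rw [countY_mul]; omega,
      show 1 ≤ countY (v * u) by rw [countY_mul]; omega⟩

noncomputable def gapIdeal (s : ℕ) : TwoSidedIdeal (GoodAlgebra k) :=
  wordIdeal isFactorClosed_good {w | s ∈ gaps w} fun u v hv =>
    ⟨(gaps_suffix_mul u v).subset hv, (gaps_prefix_mul v u).subset hv⟩

variable {k}

theorem yxy_mem_yIdeal (s : ℕ) : toGoodAlgebra k (yxy s) ∈ yIdeal k :=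
  ofWord_mem_wordIdeal _ (show 1 ≤ countY (yxy s) by simp [yxy, countY])

theorem yxy_mem_gapIdeal (s : ℕ) : toGoodAlgebra k (yxy s) ∈ gapIdeal k s :=
  ofWord_mem_wordIdeal _ (show s ∈ gaps (yxy s) by simp [yxy, gaps])

theorem isNilpotent_of_mem_yIdeal {a : GoodAlgebra k} (ha : a ∈ yIdeal k) : IsNilpotent a := by
  classical
  obtain ⟨T, hTsub, haT⟩ := mem_span_finite_of_mem_span ((mem_wordIdeal _).1 ha)
  obtain ⟨F, hFsub, rfl⟩ := Finset.subset_set_image_iff.1 hTsub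
  refine ⟨2 * F.sup length + 3, pow_eq_zero_of_mem_span_ofWord isFactorClosed_good (F := F)
    (fun w hw => ?_) (by simpa using haT)⟩
  exact not_good_of_mem_pow (fun u hu => ⟨hFsub hu, Finset.le_sup hu⟩) hw

theorem mul_eq_zero_of_mem_gapIdeal {s : ℕ} {a b : GoodAlgebra k} (ha : a ∈ gapIdeal k s)
    (hb : b ∈ gapIdeal k s) : a * b = 0 := by
  have hab := mul_mem_mul ((mem_wordIdeal _).1 ha) ((mem_wordIdeal _).1 hb)
  rw [span_mul_span] at hab
  refine (mem_bot k).1 (span_le.2 ?_ hab)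
  rintro _ ⟨_, ⟨u, hu, rfl⟩, _, ⟨v, hv, rfl⟩, rfl⟩
  change ofWord k _ u * ofWord k _ v ∈ (⊥ : Submodule k _)
  rw [← map_mul, ofWord_eq_zero isFactorClosed_good (u := u * v) (not_good_mul_of_mem_gaps hu hv)]
  exact zero_mem _

variable [Nontrivial k]

theorem not_isNilpotentTwoSidedIdeal_of_forall_yxy_mem (I : TwoSidedIdeal (GoodAlgebra k))
    (hI : ∀ s, toGoodAlgebra k (yxy s) ∈ I) : ¬ IsNilpotentTwoSidedIdeal I := by
  refine not_isNilpotentTwoSidedIdeal_of_forall_exists_prod_mem isFactorClosed_good I fun m =>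
    ⟨staircase m, length_staircase m, fun u hu => ?_, good_prod_staircase m⟩
  obtain ⟨s, v, rfl⟩ := exists_eq_yxy_mul_of_mem_staircase hu
  rw [map_mul]
  exact I.mul_mem_right _ _ (hI s)

theorem not_isNilpotentTwoSidedIdeal_yIdeal : ¬ IsNilpotentTwoSidedIdeal (yIdeal k) :=
  not_isNilpotentTwoSidedIdeal_of_forall_yxy_mem _ yxy_mem_yIdeal

theorem exists_isNilpotentTwoSidedIdeal_gt {N : TwoSidedIdeal (GoodAlgebra k)}
    (hN : IsNilpotentTwoSidedIdeal N) :
    ∃ N' : TwoSidedIdeal (GoodAlgebra k), IsNilpotentTwoSidedIdeal N' ∧ N < N' := by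
  obtain ⟨s, hs⟩ : ∃ s, toGoodAlgebra k (yxy s) ∉ N := by
    by_contra! h
    exact not_isNilpotentTwoSidedIdeal_of_forall_yxy_mem N h hN
  refine ⟨N ⊔ gapIdeal k s, hN.sup_of_mul_eq_zero fun a ha b hb =>
    mul_eq_zero_of_mem_gapIdeal ha hb, lt_of_le_of_ne le_sup_left fun h => hs ?_⟩
  exact h ▸ TwoSidedIdeal.mem_sup_right (yxy_mem_gapIdeal s)

end GoodAlgebra

section GelfandKirillovDimension

variable (k : Type) [Field k]

theorem adjoin_x_y_eq_top : Algebra.adjoin k (toGoodAlgebra k '' {x, y}) = ⊤ :=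
  adjoin_ofWord_image_eq_top _ closure_x_y

noncomputable def generatingSpace : Submodule k (GoodAlgebra k) :=
  span k (toGoodAlgebra k '' {1, x, y})

theorem finrank_generatingSpace_pow_le (n : ℕ) :
    finrank k ↥(generatingSpace k ^ n) ≤ (n + 1) ^ 4 := by
  obtain ⟨hfin, hcard⟩ := finite_good_length_le_and_ncard_le n
  have hle : generatingSpace k ^ n ≤
      span k (toGoodAlgebra k '' ({w | Good w} ∩ {w | length w ≤ n})) := by
    rw [span_ofWord_image_inter, generatingSpace, span_pow, ← Set.image_pow]
    refine span_mono (Set.image_mono fun w hw => ?_)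
    have h1 : ∀ u ∈ ({1, x, y} : Set XYWord), length u ≤ 1 := by
      simp [one_def, x, y, length]
    simpa using length_le_of_mem_pow h1 hw
  have := FiniteDimensional.span_of_finite k (hfin.image (toGoodAlgebra k))
  calc finrank k ↥(generatingSpace k ^ n)
      ≤ finrank k (span k (toGoodAlgebra k '' ({w | Good w} ∩ {w | length w ≤ n}))) :=
        Submodule.finrank_mono hle
    _ ≤ ({w | Good w} ∩ {w | length w ≤ n}).ncard := finrank_span_image_le_ncard _ hfin
    _ ≤ (n + 1) ^ 4 := hcard

theorem gkDimLE_six : gkDimLE k (GoodAlgebra k) 6 := by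
  have hgen : Algebra.adjoin k (generatingSpace k : Set (GoodAlgebra k)) = ⊤ := by
    refine eq_top_iff.2 ((adjoin_x_y_eq_top k).symm.le.trans (Algebra.adjoin_mono ?_))
    exact (Set.image_mono (by simp)).trans subset_span
  have hpow : ∀ᶠ n : ℕ in Filter.atTop, finrank k ↥(generatingSpace k ^ n) ≤ n ^ 6 := by
    filter_upwards [Filter.eventually_ge_atTop 4] with n hn
    calc finrank k ↥(generatingSpace k ^ n) ≤ (n + 1) ^ 4 := finrank_generatingSpace_pow_le k n
      _ ≤ (2 * n) ^ 4 := by gcongr; omega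
      _ = 16 * n ^ 4 := by ring
      _ ≤ n ^ 2 * n ^ 4 := by gcongr; nlinarith
      _ = n ^ 6 := by ring
  exact_mod_cast gkDimLE_of_eventually_finrank_pow_le (generatingSpace k)
    (FiniteDimensional.span_of_finite k ((Set.toFinite _).image _))
    (subset_span ⟨1, by simp, map_one _⟩) hgen 6 hpow

end GelfandKirillovDimension

end XYWord

theorem exists_fg_algebra_gk_le_six_nonnilpotent_nil_ideal_no_maximal_nilpotent_general
    (k : Type) [Field k] :
    ∃ (A : Type) (_ : Ring A) (_ : Algebra k A),
      (∃ s : Finset A, Algebra.adjoin k (s : Set A) = ⊤) ∧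
      gkDimLE k A 6 ∧
      (∃ J : TwoSidedIdeal A, (∀ x ∈ J, IsNilpotent x) ∧ ¬ IsNilpotentTwoSidedIdeal J) ∧
      (∀ N : TwoSidedIdeal A, IsNilpotentTwoSidedIdeal N →
        ∃ N' : TwoSidedIdeal A, IsNilpotentTwoSidedIdeal N' ∧ N < N') := by
  classical
  refine ⟨XYWord.GoodAlgebra k, inferInstance, inferInstance, ?_, XYWord.gkDimLE_six k,
    ⟨XYWord.yIdeal k, fun _ => XYWord.isNilpotent_of_mem_yIdeal,
      XYWord.not_isNilpotentTwoSidedIdeal_yIdeal⟩,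
    fun _ => XYWord.exists_isNilpotentTwoSidedIdeal_gt⟩
  refine ⟨{XYWord.toGoodAlgebra k XYWord.x, XYWord.toGoodAlgebra k XYWord.y}, ?_⟩
  simpa [Set.image_insert_eq] using XYWord.adjoin_x_y_eq_top k

/-- Over a countable field `k` there is a finitely generated `k`-algebra of
Gelfand–Kirillov dimension at most six having a nil two-sided ideal that is not
nilpotent, and having no maximal nilpotent two-sided ideal. -/
theorem exists_fg_algebra_gk_le_six_nonnilpotent_nil_ideal_no_maximal_nilpotent
    (k : Type) [Field k] [Countable k] :
    ∃ (A : Type) (_ : Ring A) (_ : Algebra k A),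
      (∃ s : Finset A, Algebra.adjoin k (s : Set A) = ⊤) ∧
      gkDimLE k A 6 ∧
      (∃ J : TwoSidedIdeal A, (∀ x ∈ J, IsNilpotent x) ∧ ¬ IsNilpotentTwoSidedIdeal J) ∧
      (∀ N : TwoSidedIdeal A, IsNilpotentTwoSidedIdeal N →
        ∃ N' : TwoSidedIdeal A, IsNilpotentTwoSidedIdeal N' ∧ N < N') :=
  exists_fg_algebra_gk_le_six_nonnilpotent_nil_ideal_no_maximal_nilpotent_general k
end
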